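/- For 1-D Gaussians, the map (μ, σ) ↦ N(μ, σ²) from ℝ × ℝ_{>0} into (P₂(ℝ), W₂) is an isometry onto its image when ℝ × ℝ_{>0} carries the Euclidean metric: W₂(N(μ₁,σ₁²), N(μ₂,σ₂²)) = sqrt((μ₁−μ₂)² + (σ₁−σ₂)²). Consequently, for 1-D Gaussians Q_k = N(m_k, s_k²) and weights λ ∈ Δ_K, the W₂-barycenter is the Gaussian N(∑ₖ λₖ mₖ, (∑ₖ λₖ sₖ)²). -/

import Mathlib

/-! For any coupling `(X, Y)` of `P` and `Q`, the cost `E(X - Y)²` is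
`(EX - EY)² + Var(X - Y)`, and Cauchy–Schwarz for the covariance bounds `Var(X - Y)` below by
`(sd X - sd Y)²`. The comonotone coupling `(σ₁ Z + μ₁, σ₂ Z + μ₂)`, `Z ~ N(0, 1)`, of two
Gaussians attains this bound, which gives the isometry. For the barycenter, the weighted mean
minimises a weighted sum of squared distances on `ℝ`; applied to the means and to the standard
deviations, and combined with the same lower bound for an arbitrary `P`, this shows that the
Gaussian with averaged parameters beats every `P`. -/

open MeasureTheory ProbabilityTheory Finset

/-- The squared 2-Wasserstein distance on `ℝ`, defined via the Kantorovich problem. -/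
noncomputable def W2sq (P Q : Measure ℝ) : ℝ :=
  sInf {c | ∃ γ : Measure (ℝ × ℝ), γ.map Prod.fst = P ∧ γ.map Prod.snd = Q ∧
    c = ∫ p, (p.1 - p.2) ^ 2 ∂γ}

/-- The 2-Wasserstein distance on `ℝ`. -/
noncomputable def W2 (P Q : Measure ℝ) : ℝ := Real.sqrt (W2sq P Q)

open scoped NNReal

section Moments

variable {Ω : Type*} [MeasurableSpace Ω] {μ : Measure Ω} {X Y : Ω → ℝ}

lemma sq_covariance_le_variance_mul_variance [IsFiniteMeasure μ] (hX : MemLp X 2 μ)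
    (hY : MemLp Y 2 μ) : cov[X, Y; μ] ^ 2 ≤ Var[X; μ] * Var[Y; μ] := by
  have hquad : ∀ t : ℝ, 0 ≤ Var[X; μ] * (t * t) + (-2 * cov[X, Y; μ]) * t + Var[Y; μ] := by
    intro t
    have h := variance_nonneg (t • X - Y) μ
    rw [variance_sub (hX.const_smul t) hY, variance_smul, covariance_smul_left] at h
    linarith
  have := discrim_le_zero hquad
  rw [discrim] at this
  linarith

lemma covariance_le_sqrt_variance_mul_sqrt_variance [IsFiniteMeasure μ] (hX : MemLp X 2 μ)
    (hY : MemLp Y 2 μ) : cov[X, Y; μ] ≤ √Var[X; μ] * √Var[Y; μ] := by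
  rw [← Real.sqrt_mul (variance_nonneg X μ)]
  exact (le_abs_self _).trans (Real.abs_le_sqrt (sq_covariance_le_variance_mul_variance hX hY))

lemma sq_sqrt_variance_sub_sqrt_variance_le_variance_sub [IsFiniteMeasure μ]
    (hX : MemLp X 2 μ) (hY : MemLp Y 2 μ) :
    (√Var[X; μ] - √Var[Y; μ]) ^ 2 ≤ Var[X - Y; μ] := by
  rw [variance_sub hX hY, sub_sq, Real.sq_sqrt (variance_nonneg X μ),
    Real.sq_sqrt (variance_nonneg Y μ)]
  linarith [covariance_le_sqrt_variance_mul_sqrt_variance hX hY]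

lemma sq_sub_integral_add_sq_sub_sqrt_variance_le_integral_sq_sub [IsProbabilityMeasure μ]
    (hX : MemLp X 2 μ) (hY : MemLp Y 2 μ) :
    (μ[X] - μ[Y]) ^ 2 + (√Var[X; μ] - √Var[Y; μ]) ^ 2 ≤ ∫ ω, (X ω - Y ω) ^ 2 ∂μ := by
  have hmean : μ[X - Y] = μ[X] - μ[Y] :=
    integral_sub (hX.integrable one_le_two) (hY.integrable one_le_two)
  have hsplit := variance_eq_sub (hX.sub hY)
  rw [hmean] at hsplit
  have := sq_sqrt_variance_sub_sqrt_variance_le_variance_sub hX hY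
  simp only [Pi.pow_apply, Pi.sub_apply] at hsplit
  linarith

end Moments

section Couplings

variable {P Q : Measure ℝ} {γ : Measure (ℝ × ℝ)}

lemma W2sq_le_integral_sq_sub (h₁ : γ.map Prod.fst = P) (h₂ : γ.map Prod.snd = Q) :
    W2sq P Q ≤ ∫ p, (p.1 - p.2) ^ 2 ∂γ :=
  csInf_le ⟨0, by rintro _ ⟨γ', -, -, rfl⟩; positivity⟩ ⟨γ, h₁, h₂, rfl⟩

lemma sq_sub_integral_add_sq_sub_sqrt_variance_le_integral_coupling [IsProbabilityMeasure P]
    (hP : MemLp id 2 P) (hQ : MemLp id 2 Q) (h₁ : γ.map Prod.fst = P)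
    (h₂ : γ.map Prod.snd = Q) :
    (∫ x, x ∂P - ∫ x, x ∂Q) ^ 2 + (√Var[id; P] - √Var[id; Q]) ^ 2
      ≤ ∫ p, (p.1 - p.2) ^ 2 ∂γ := by
  subst h₁ h₂
  have : IsProbabilityMeasure γ := Measure.isProbabilityMeasure_of_map Prod.fst
  rw [memLp_map_measure_iff aestronglyMeasurable_id measurable_fst.aemeasurable] at hP
  rw [memLp_map_measure_iff aestronglyMeasurable_id measurable_snd.aemeasurable] at hQ
  rw [integral_map measurable_fst.aemeasurable (f := fun x ↦ x) aestronglyMeasurable_id,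
    integral_map measurable_snd.aemeasurable (f := fun x ↦ x) aestronglyMeasurable_id,
    variance_id_map measurable_fst.aemeasurable, variance_id_map measurable_snd.aemeasurable]
  exact sq_sub_integral_add_sq_sub_sqrt_variance_le_integral_sq_sub hP hQ

lemma sq_sub_integral_add_sq_sub_sqrt_variance_le_W2sq [IsProbabilityMeasure P]
    [IsProbabilityMeasure Q] (hP : MemLp id 2 P) (hQ : MemLp id 2 Q) :
    (∫ x, x ∂P - ∫ x, x ∂Q) ^ 2 + (√Var[id; P] - √Var[id; Q]) ^ 2 ≤ W2sq P Q := by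
  refine le_csInf ⟨_, P.prod Q, by simp, by simp, rfl⟩ ?_
  rintro _ ⟨γ, h₁, h₂, rfl⟩
  exact sq_sub_integral_add_sq_sub_sqrt_variance_le_integral_coupling hP hQ h₁ h₂

end Couplings

section Gaussian

lemma gaussianReal_map_affine (μ σ : ℝ) :
    (gaussianReal 0 1).map (fun x ↦ σ * x + μ) = gaussianReal μ (σ ^ 2).toNNReal := by
  rw [show (fun x ↦ σ * x + μ) = (· + μ) ∘ (σ * ·) from rfl,
    ← Measure.map_map (measurable_add_const μ) (measurable_const_mul σ),
    gaussianReal_map_const_mul, gaussianReal_map_add_const]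
  congr 1
  · ring
  · ext; simp [sq_nonneg]

lemma integral_sq_gaussianReal (μ : ℝ) (v : ℝ≥0) : ∫ x, x ^ 2 ∂gaussianReal μ v = μ ^ 2 + v := by
  have h := variance_eq_sub (memLp_id_gaussianReal (μ := μ) (v := v) 2)
  change Var[id; _] = ∫ x, x ^ 2 ∂_ - (∫ x, x ∂_) ^ 2 at h
  rw [variance_id_gaussianReal, integral_id_gaussianReal] at h
  linarith

lemma sqrt_variance_gaussianReal {σ : ℝ} (μ : ℝ) (hσ : 0 ≤ σ) :
    √Var[id; gaussianReal μ (σ ^ 2).toNNReal] = σ := by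
  rw [variance_id_gaussianReal, Real.coe_toNNReal _ (sq_nonneg σ), Real.sqrt_sq hσ]

lemma sq_sub_add_sq_sub_le_W2sq_gaussianReal {P : Measure ℝ} [IsProbabilityMeasure P]
    (hP : MemLp id 2 P) {μ σ : ℝ} (hσ : 0 ≤ σ) :
    (∫ x, x ∂P - μ) ^ 2 + (√Var[id; P] - σ) ^ 2 ≤ W2sq P (gaussianReal μ (σ ^ 2).toNNReal) := by
  have h := sq_sub_integral_add_sq_sub_sqrt_variance_le_W2sq hP
    (memLp_id_gaussianReal (μ := μ) (v := (σ ^ 2).toNNReal) 2)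
  rwa [integral_id_gaussianReal, sqrt_variance_gaussianReal μ hσ] at h

lemma W2sq_gaussianReal {μ₁ μ₂ σ₁ σ₂ : ℝ} (h₁ : 0 ≤ σ₁) (h₂ : 0 ≤ σ₂) :
    W2sq (gaussianReal μ₁ (σ₁ ^ 2).toNNReal) (gaussianReal μ₂ (σ₂ ^ 2).toNNReal)
      = (μ₁ - μ₂) ^ 2 + (σ₁ - σ₂) ^ 2 := by
  refine le_antisymm ?_ ?_
  · let φ : ℝ → ℝ × ℝ := fun x ↦ (σ₁ * x + μ₁, σ₂ * x + μ₂)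
    have hφ : Measurable φ := by fun_prop
    calc _ ≤ ∫ p, (p.1 - p.2) ^ 2 ∂(gaussianReal 0 1).map φ :=
          W2sq_le_integral_sq_sub
            (by rw [Measure.map_map measurable_fst hφ]; exact gaussianReal_map_affine μ₁ σ₁)
            (by rw [Measure.map_map measurable_snd hφ]; exact gaussianReal_map_affine μ₂ σ₂)
      _ = ∫ x, x ^ 2 ∂(gaussianReal 0 1).map (fun x ↦ (σ₁ - σ₂) * x + (μ₁ - μ₂)) := by
          rw [integral_map hφ.aemeasurable (by fun_prop), integral_map (by fun_prop) (by fun_prop)]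
          congr 1 with x
          ring
      _ = _ := by
          rw [gaussianReal_map_affine, integral_sq_gaussianReal,
            Real.coe_toNNReal _ (sq_nonneg _)]
  · have h := sq_sub_add_sq_sub_le_W2sq_gaussianReal
      (memLp_id_gaussianReal (μ := μ₁) (v := (σ₁ ^ 2).toNNReal) 2) (μ := μ₂) h₂
    rwa [integral_id_gaussianReal, sqrt_variance_gaussianReal μ₁ h₁] at h

end Gaussian

lemma sum_mul_sq_weightedMean_sub_le {ι : Type*} [Fintype ι] (w a : ι → ℝ)
    (hw : ∑ i, w i = 1) (x : ℝ) :
    ∑ i, w i * (∑ j, w j * a j - a i) ^ 2 ≤ ∑ i, w i * (x - a i) ^ 2 := by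
  set ā := ∑ j, w j * a j
  have parallel_axis : ∑ i, w i * (x - a i) ^ 2 = ∑ i, w i * (ā - a i) ^ 2 + (x - ā) ^ 2 := by
    have h : ∀ i, w i * (x - a i) ^ 2
        = w i * (ā - a i) ^ 2 + ((x - ā) * (x + ā) * w i - 2 * (x - ā) * (w i * a i)) := by
      intro i; ring
    simp only [h, sum_add_distrib, sum_sub_distrib, ← mul_sum, hw]
    ring
  rw [parallel_axis]
  nlinarith [sq_nonneg (x - ā)]

/-- The map `(μ,σ) ↦ N(μ,σ²)` is an isometry from `ℝ × ℝ_{>0}` (with Euclidean metric) into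
`(P₂(ℝ), W₂)`; consequently, the `W₂`-barycenter of Gaussians `N(mₖ, sₖ²)` with weights
`λ ∈ Δ_K` is the Gaussian `N(∑ₖ λₖ mₖ, (∑ₖ λₖ sₖ)²)`. -/
theorem gaussian_isometry_and_barycenter {K : ℕ}
    (lam : Fin K → ℝ) (hlam : ∀ k, 0 ≤ lam k) (hsum : ∑ k, lam k = 1)
    (m s : Fin K → ℝ) (hs : ∀ k, 0 < s k) :
    (∀ μ₁ μ₂ σ₁ σ₂ : ℝ, 0 < σ₁ → 0 < σ₂ →
      W2 (gaussianReal μ₁ (Real.toNNReal (σ₁ ^ 2))) (gaussianReal μ₂ (Real.toNNReal (σ₂ ^ 2)))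
        = Real.sqrt ((μ₁ - μ₂) ^ 2 + (σ₁ - σ₂) ^ 2)) ∧
    (let Qbar : Measure ℝ :=
        gaussianReal (∑ k, lam k * m k) (Real.toNNReal ((∑ k, lam k * s k) ^ 2))
      ∀ P : Measure ℝ, IsProbabilityMeasure P → Integrable (fun x => x ^ 2) P →
        ∑ k, lam k * W2sq Qbar (gaussianReal (m k) (Real.toNNReal (s k ^ 2))) ≤
        ∑ k, lam k * W2sq P (gaussianReal (m k) (Real.toNNReal (s k ^ 2)))) := by
  refine ⟨fun μ₁ μ₂ σ₁ σ₂ h₁ h₂ ↦ by rw [W2, W2sq_gaussianReal h₁.le h₂.le], ?_⟩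
  intro Qbar P _ hP2
  have hP : MemLp id 2 P := (memLp_two_iff_integrable_sq aestronglyMeasurable_id).2 hP2
  have hsbar : 0 ≤ ∑ k, lam k * s k := sum_nonneg fun k _ ↦ mul_nonneg (hlam k) (hs k).le
  calc ∑ k, lam k * W2sq Qbar (gaussianReal (m k) (s k ^ 2).toNNReal)
      = ∑ k, lam k * (∑ j, lam j * m j - m k) ^ 2
          + ∑ k, lam k * (∑ j, lam j * s j - s k) ^ 2 := by
        simp only [Qbar, W2sq_gaussianReal hsbar (hs _).le, mul_add, sum_add_distrib]
    _ ≤ ∑ k, lam k * (∫ x, x ∂P - m k) ^ 2 + ∑ k, lam k * (√Var[id; P] - s k) ^ 2 :=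
        add_le_add (sum_mul_sq_weightedMean_sub_le lam m hsum _)
          (sum_mul_sq_weightedMean_sub_le lam s hsum _)
    _ = ∑ k, lam k * ((∫ x, x ∂P - m k) ^ 2 + (√Var[id; P] - s k) ^ 2) := by
        simp only [mul_add, sum_add_distrib]
    _ ≤ ∑ k, lam k * W2sq P (gaussianReal (m k) (s k ^ 2).toNNReal) :=
        sum_le_sum fun k _ ↦ mul_le_mul_of_nonneg_left
          (sq_sub_add_sq_sub_le_W2sq_gaussianReal hP (hs k).le) (hlam k)
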